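/- arXiv:math/9705211 — 2 statements merged into one kernel-verified Lean document; each statement's English description precedes it below -/
import Mathlib

section
/- Let H be a Hilbert space and T, S ∈ B(H) with ST = I. If for every injective compact operator A the operator TAS is also injective, then TS = I (so S = T⁻¹). -/
/-!
Since `S ∘ T = 1`, the identity `T ∘ S = 1` follows once `S` is injective, and `S` is injective as
soon as some injective compact `A` exists, because `S x = S y` forces `T A S x = T A S y`.
On a separable Hilbert space with dense sequence `(uₙ)`, rescale to `vₙ = cₙ uₙ` with
`∑ ‖vₙ‖² < ∞` and take `A = ∑ₙ |vₙ⟩⟨vₙ|`: it is a norm limit of finite-rank operators, hence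
compact, and `⟪x, A x⟫ = ∑ₙ |⟪vₙ, x⟫|²`, so `A x = 0` makes `x` orthogonal to a dense set.
-/

open InnerProductSpace ContinuousLinearMap

section Compact

variable {𝕜 M₁ M₂ : Type*} [NontriviallyNormedField 𝕜] [NormedAddCommGroup M₁] [NormedSpace 𝕜 M₁]
  [NormedAddCommGroup M₂] [NormedSpace 𝕜 M₂] [CompleteSpace M₂]

theorem HasSum.isCompactOperator {ι : Type*} {f : ι → M₁ →L[𝕜] M₂} {A : M₁ →L[𝕜] M₂}
    (hA : HasSum f A) (hf : ∀ i, IsCompactOperator (f i)) : IsCompactOperator A :=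
  isCompactOperator_of_tendsto hA <| .of_forall fun _ =>
    Submodule.sum_mem (compactOperator (RingHom.id 𝕜) M₁ M₂) fun i _ => hf i

end Compact

section RankOne

variable {𝕜 E F : Type*} [RCLike 𝕜] [NormedAddCommGroup E] [InnerProductSpace 𝕜 E]
  [NormedAddCommGroup F] [InnerProductSpace 𝕜 F]

theorem isCompactOperator_rankOne (x : E) (y : F) : IsCompactOperator (rankOne 𝕜 x y) :=
  (isCompactOperator_of_locallyCompactSpace_dom (innerSL 𝕜 y)).clm_comp (toSpanSingleton 𝕜 x)

section Complete

variable [CompleteSpace E] {ι : Type*} {v : ι → E}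

theorem summable_rankOne_self (hv : Summable fun i => ‖v i‖ ^ 2) :
    Summable fun i => rankOne 𝕜 (v i) (v i) :=
  .of_norm <| by simpa only [norm_rankOne, sq] using hv

theorem isCompactOperator_tsum_rankOne_self (hv : Summable fun i => ‖v i‖ ^ 2) :
    IsCompactOperator (∑' i, rankOne 𝕜 (v i) (v i) : E →L[𝕜] E) :=
  (summable_rankOne_self hv).hasSum.isCompactOperator fun _ => isCompactOperator_rankOne _ _

theorem hasSum_re_inner_tsum_rankOne_self (hv : Summable fun i => ‖v i‖ ^ 2) (x : E) :
    HasSum (fun i => ‖⟪v i, x⟫_𝕜‖ ^ 2)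
      (RCLike.re ⟪x, (∑' i, rankOne 𝕜 (v i) (v i) : E →L[𝕜] E) x⟫_𝕜) := by
  have := (((summable_rankOne_self hv).hasSum.mapL (apply 𝕜 E x)).mapL (innerSL 𝕜 x)).mapL
    RCLike.reCLM
  have hterm : ∀ y : E, ⟪x, rankOne 𝕜 y y x⟫_𝕜 = (‖⟪y, x⟫_𝕜‖ ^ 2 : ℝ) := fun y => by
    rw [rankOne_apply, inner_smul_right, ← inner_conj_symm x y, RCLike.mul_conj]
    norm_cast
  simpa only [RCLike.reCLM_apply, innerSL_apply_apply, apply_apply, hterm, RCLike.ofReal_re]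
    using this

theorem injective_tsum_rankOne_self (hv : Summable fun i => ‖v i‖ ^ 2)
    (htotal : ∀ x, (∀ i, ⟪v i, x⟫_𝕜 = 0) → x = 0) :
    Function.Injective (∑' i, rankOne 𝕜 (v i) (v i) : E →L[𝕜] E) := by
  refine (injective_iff_map_eq_zero _).2 fun x hx => htotal x fun i => ?_
  have hsum := hasSum_re_inner_tsum_rankOne_self (𝕜 := 𝕜) hv x
  rw [hx, inner_zero_right, map_zero, hasSum_zero_iff_of_nonneg fun i => by positivity] at hsum
  simpa using congr_fun hsum i

end Complete

theorem exists_injective_isCompactOperator [CompleteSpace E]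
    [TopologicalSpace.SeparableSpace E] :
    ∃ A : E →L[𝕜] E, IsCompactOperator A ∧ Function.Injective A := by
  obtain ⟨u, hu⟩ := TopologicalSpace.exists_dense_seq E
  set c : ℕ → ℝ := fun n => (1 / 2) ^ n / (1 + ‖u n‖)
  have hc : ∀ n, 0 < c n := fun n => by positivity
  set v : ℕ → E := fun n => (c n : 𝕜) • u n
  have hv_le : ∀ n, ‖v n‖ ≤ (1 / 2) ^ n := fun n => by
    rw [norm_smul, RCLike.norm_ofReal, abs_of_pos (hc n), div_mul_eq_mul_div,
      div_le_iff₀ (by positivity)]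
    gcongr
    exact le_add_of_nonneg_left zero_le_one
  have hv : Summable fun n => ‖v n‖ ^ 2 := by
    refine summable_geometric_two.of_nonneg_of_le (fun n => by positivity) fun n => ?_
    have h1 : ((1 : ℝ) / 2) ^ n ≤ 1 := pow_le_one₀ (by norm_num) (by norm_num)
    nlinarith [hv_le n, norm_nonneg (v n)]
  refine ⟨_, isCompactOperator_tsum_rankOne_self hv, injective_tsum_rankOne_self hv ?_⟩
  refine fun x hx => hu.eq_zero_of_inner_right 𝕜 fun n => ?_
  simpa [v, inner_smul_left, (hc n).ne'] using hx n

end RankOne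

theorem stmt5_general {H : Type*} [NormedAddCommGroup H] [InnerProductSpace ℂ H]
    [CompleteSpace H] [TopologicalSpace.SeparableSpace H]
    (T S : H →L[ℂ] H) (hST : S ∘L T = 1)
    (h : ∀ A : H →L[ℂ] H, IsCompactOperator A → Function.Injective A →
      Function.Injective (T ∘L A ∘L S)) :
    T ∘L S = 1 := by
  obtain ⟨A, hA_compact, hA_inj⟩ := exists_injective_isCompactOperator (𝕜 := ℂ) (E := H)
  have hS_inj : Function.Injective S := fun x y hxy => h A hA_compact hA_inj (by simp [hxy])
  have hST' : Function.LeftInverse S T := fun x => by simpa using congr($hST x)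
  ext x
  exact hST'.rightInverse_of_injective hS_inj x

theorem stmt5 {H : Type*} [NormedAddCommGroup H] [InnerProductSpace ℂ H]
    [CompleteSpace H] [TopologicalSpace.SeparableSpace H] (hinf : ¬ FiniteDimensional ℂ H)
    (T S : H →L[ℂ] H) (hST : S ∘L T = 1)
    (h : ∀ A : H →L[ℂ] H, IsCompactOperator A → Function.Injective A →
      Function.Injective (T ∘L A ∘L S)) :
    T ∘L S = 1 :=
  stmt5_general T S hST h
end

section
/- Let X be a compact Hausdorff space such that for every x ∈ X there is a continuous function f : X → ℂ with f(x) ≠ f(y) for all y ≠ x. If Φ : C(X) → C(X) is a linear map such that for every f ∈ C(X) there exist a homeomorphism ψ_f : X → X and a unimodular τ_f ∈ C(X) with Φ(f) = τ_f · (f ∘ ψ_f), then Φ itself is of the form Φ(f) = τ · (f ∘ ψ) for a fixed unimodular τ ∈ C(X) and homeomorphism ψ of X — in particular Φ is a surjective isometry. -/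
/-!
For each `x`, `L f = Φ f x / Φ 1 x` is a linear functional with `|L f| ∈ |f|(X)`; applied to
`f - L f` this gives `L f ∈ f(X)`. For such functionals a Gleason–Kahane–Żelazko argument works
in `C(X)`: `L` kills `|f - L f|²`, hence `L (∑ |fᵢ - L fᵢ|²) = 0`, so this sum has a zero, and
compactness gives one point `p` with `L f = f p` for every `f`. Thus `Φ f = Φ 1 · (f ∘ ε)`.
Applying the hypothesis to a function vanishing exactly at `q` shows `ε⁻¹{q} = {ψ⁻¹ q}`, so `ε`
is bijective, and it is continuous because every `f ∘ ε = Φ f / Φ 1` is.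
-/

open ComplexStarModule ComplexOrder

section PointEvaluation

variable {X : Type*} [TopologicalSpace X] {L : C(X, ℂ) →ₗ[ℂ] ℂ}

lemma apply_mem_range_of_norm_apply (hL1 : L 1 = 1) (hL : ∀ f, ∃ q, ‖L f‖ = ‖f q‖)
    (f : C(X, ℂ)) : L f ∈ Set.range f := by
  obtain ⟨q, hq⟩ := hL (f - L f • 1)
  have hzero : L (f - L f • 1) = 0 := by simp [hL1]
  refine ⟨q, sub_eq_zero.mp (norm_eq_zero.mp ?_)⟩
  simpa [hzero, eq_comm] using hq

lemma apply_one_of_apply_mem_range (hL : ∀ f : C(X, ℂ), L f ∈ Set.range f) : L 1 = 1 :=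
  (hL 1).choose_spec.symm

lemma isSelfAdjoint_apply_of_apply_mem_range (hL : ∀ f : C(X, ℂ), L f ∈ Set.range f)
    {f : C(X, ℂ)} (hf : IsSelfAdjoint f) : IsSelfAdjoint (L f) := by
  obtain ⟨y, hy⟩ := hL f
  rw [← hy]
  exact congr($(hf.star_eq) y)

/-- `L (k * k) = L (k * k + I • k)` is real and equals `r² + I r` for some value `r` of `k`,
so `r = 0`. -/
lemma apply_mul_self_eq_zero_of_apply_mem_range (hL : ∀ f : C(X, ℂ), L f ∈ Set.range f)
    {k : C(X, ℂ)} (hk : IsSelfAdjoint k) (hk0 : L k = 0) : L (k * k) = 0 := by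
  obtain ⟨y, hy⟩ := hL (k * k + Complex.I • k)
  have hreal : IsSelfAdjoint (L (k * k)) :=
    isSelfAdjoint_apply_of_apply_mem_range hL (hk.mul hk)
  obtain ⟨r, hr⟩ : ∃ r : ℝ, k y = r :=
    ⟨_, (Complex.conj_eq_iff_re.mp congr($(hk.star_eq) y)).symm⟩
  rw [map_add, map_smul, hk0, smul_zero, add_zero] at hy
  rw [← hy] at hreal ⊢
  rw [isSelfAdjoint_iff, Complex.star_def, Complex.conj_eq_iff_im] at hreal
  simp only [ContinuousMap.add_apply, ContinuousMap.mul_apply, ContinuousMap.smul_apply, hr,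
    smul_eq_mul] at hreal ⊢
  have hr0 : r = 0 := by simpa using hreal
  simp [hr0]

lemma apply_star_mul_self_eq_zero_of_apply_mem_range (hL : ∀ f : C(X, ℂ), L f ∈ Set.range f)
    {k : C(X, ℂ)} (hk0 : L k = 0) : L (star k * k) = 0 := by
  have hre := selfAdjoint.mem_iff.mp (ℜ k).2
  have him := selfAdjoint.mem_iff.mp (ℑ k).2
  have hsplit := congr(L $(realPart_add_I_smul_imaginaryPart k))
  rw [map_add, map_smul, hk0, smul_eq_mul] at hsplit
  have hLre := isSelfAdjoint_apply_of_apply_mem_range hL hre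
  have hLim := isSelfAdjoint_apply_of_apply_mem_range hL him
  rw [isSelfAdjoint_iff, Complex.star_def, Complex.conj_eq_iff_im] at hLre hLim
  have hre0 : L (ℜ k) = 0 := by apply Complex.ext <;> simp_all [Complex.ext_iff]
  have him0 : L (ℑ k) = 0 := by apply Complex.ext <;> simp_all [Complex.ext_iff]
  rw [star_mul_self_eq_realPart_sq_add_imaginaryPart_sq k, map_add,
    apply_mul_self_eq_zero_of_apply_mem_range hL hre hre0,
    apply_mul_self_eq_zero_of_apply_mem_range hL him him0, add_zero]

theorem exists_eq_eval_of_apply_mem_range [CompactSpace X]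
    (hL : ∀ f : C(X, ℂ), L f ∈ Set.range f) : ∃ p, ∀ f, L f = f p := by
  suffices h : (⋂ f : C(X, ℂ), {y | f y = L f}).Nonempty by
    obtain ⟨p, hp⟩ := h
    exact ⟨p, fun f => (Set.mem_iInter.mp hp f).symm⟩
  refine CompactSpace.iInter_nonempty (fun f => isClosed_eq f.continuous continuous_const)
    fun s => ?_
  let k (f : C(X, ℂ)) : C(X, ℂ) := f - L f • 1
  have hk0 (f : C(X, ℂ)) : L (k f) = 0 := by
    simp [k, apply_one_of_apply_mem_range hL]
  obtain ⟨y, hy⟩ := hL (∑ f ∈ s, star (k f) * k f)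
  rw [map_sum, Finset.sum_eq_zero fun f _ =>
    apply_star_mul_self_eq_zero_of_apply_mem_range hL (hk0 f),
    ContinuousMap.coe_sum, Finset.sum_apply] at hy
  simp only [ContinuousMap.mul_apply, ContinuousMap.star_apply] at hy
  rw [Finset.sum_eq_zero_iff_of_nonneg fun f _ => star_mul_self_nonneg (k f y)] at hy
  refine ⟨y, Set.mem_iInter₂.mpr fun f hf => ?_⟩
  simpa [k, sub_eq_zero] using (CStarRing.star_mul_self_eq_zero_iff _).mp (hy f hf)

end PointEvaluation

lemma exists_forall_eq_zero_iff {X : Type*} [TopologicalSpace X]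
    (hsep : ∀ x : X, ∃ f : C(X, ℂ), ∀ y : X, y ≠ x → f y ≠ f x) (q : X) :
    ∃ f : C(X, ℂ), ∀ y, f y = 0 ↔ y = q := by
  obtain ⟨g, hg⟩ := hsep q
  refine ⟨g - g q • 1, fun y => ?_⟩
  simp only [ContinuousMap.sub_apply, ContinuousMap.smul_apply, ContinuousMap.one_apply,
    smul_eq_mul, mul_one, sub_eq_zero]
  exact ⟨not_imp_not.mp (hg y), fun h => h ▸ rfl⟩

lemma continuous_of_forall_continuous_comp {X Y : Type*} [TopologicalSpace X]
    [TopologicalSpace Y] [CompactSpace X]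
    (hsep : ∀ x : X, ∃ f : C(X, ℂ), ∀ y : X, y ≠ x → f y ≠ f x) {g : Y → X}
    (hg : ∀ f : C(X, ℂ), Continuous (f ∘ g)) : Continuous g := by
  let e (y : X) (f : C(X, ℂ)) : ℂ := f y
  have he : Topology.IsEmbedding e := by
    refine (Continuous.isClosedEmbedding (continuous_pi fun f => f.continuous) ?_).isEmbedding
    intro y₁ y₂ h
    by_contra hne
    obtain ⟨f, hf⟩ := hsep y₂
    exact hf y₁ hne congr($h f)
  exact he.continuous_iff.mpr (continuous_pi hg)

section WeightedComposition

variable {X : Type*} [TopologicalSpace X] {Φ : C(X, ℂ) →ₗ[ℂ] C(X, ℂ)}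

lemma norm_apply_one_apply (hloc : ∀ f : C(X, ℂ), ∃ (ψ : X ≃ₜ X) (τ : C(X, ℂ)),
      (∀ x, ‖τ x‖ = 1) ∧ Φ f = τ * f.comp (ψ : C(X, X))) (x : X) : ‖Φ 1 x‖ = 1 := by
  obtain ⟨ψ, τ, hτ, h⟩ := hloc 1
  simpa [h] using hτ x

lemma apply_one_apply_ne_zero (hloc : ∀ f : C(X, ℂ), ∃ (ψ : X ≃ₜ X) (τ : C(X, ℂ)),
      (∀ x, ‖τ x‖ = 1) ∧ Φ f = τ * f.comp (ψ : C(X, X))) (x : X) : Φ 1 x ≠ 0 :=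
  ne_zero_of_norm_ne_zero (by simp [norm_apply_one_apply hloc x])

lemma exists_apply_eq_apply_one_mul [CompactSpace X]
    (hloc : ∀ f : C(X, ℂ), ∃ (ψ : X ≃ₜ X) (τ : C(X, ℂ)),
      (∀ x, ‖τ x‖ = 1) ∧ Φ f = τ * f.comp (ψ : C(X, X))) (x : X) :
    ∃ p, ∀ f, Φ f x = Φ 1 x * f p := by
  have hone := apply_one_apply_ne_zero hloc x
  let L : C(X, ℂ) →ₗ[ℂ] ℂ := (Φ 1 x)⁻¹ • ((ContinuousMap.evalCLM ℂ x).toLinearMap ∘ₗ Φ)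
  have hL (f : C(X, ℂ)) : Φ f x = Φ 1 x * L f := by simp [L, hone]
  have hnorm (f : C(X, ℂ)) : ∃ q, ‖L f‖ = ‖f q‖ := by
    obtain ⟨ψ, τ, hτ, h⟩ := hloc f
    exact ⟨ψ x, by simp [L, h, hτ x, norm_apply_one_apply hloc x]⟩
  obtain ⟨p, hp⟩ := exists_eq_eval_of_apply_mem_range
    (apply_mem_range_of_norm_apply (by simp [L, hone]) hnorm)
  exact ⟨p, fun f => by rw [hL, hp]⟩

lemma bijective_of_forall_apply_eq_apply_one_mul
    (hsep : ∀ x : X, ∃ f : C(X, ℂ), ∀ y : X, y ≠ x → f y ≠ f x)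
    (hloc : ∀ f : C(X, ℂ), ∃ (ψ : X ≃ₜ X) (τ : C(X, ℂ)),
      (∀ x, ‖τ x‖ = 1) ∧ Φ f = τ * f.comp (ψ : C(X, X)))
    {ε : X → X} (hε : ∀ x f, Φ f x = Φ 1 x * f (ε x)) : Function.Bijective ε := by
  refine Function.bijective_iff_existsUnique _ |>.mpr fun q => ?_
  obtain ⟨f, hf⟩ := exists_forall_eq_zero_iff hsep q
  obtain ⟨ψ, τ, hτ, h⟩ := hloc f
  have hfiber (x : X) : ε x = q ↔ x = ψ.symm q := by
    have hΦ : Φ 1 x * f (ε x) = τ x * f (ψ x) := (hε x f).symm.trans congr($h x)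
    have hτx : τ x ≠ 0 := ne_zero_of_norm_ne_zero (by simp [hτ x])
    calc ε x = q ↔ Φ 1 x * f (ε x) = 0 := by simp [hf, apply_one_apply_ne_zero hloc x]
      _ ↔ τ x * f (ψ x) = 0 := by rw [hΦ]
      _ ↔ x = ψ.symm q := by rw [mul_eq_zero, hf, or_iff_right hτx, ψ.eq_symm_apply]
  exact ⟨ψ.symm q, (hfiber _).mpr rfl, fun x hx => (hfiber x).mp hx⟩

lemma continuous_of_forall_apply_eq_apply_one_mul [CompactSpace X]
    (hsep : ∀ x : X, ∃ f : C(X, ℂ), ∀ y : X, y ≠ x → f y ≠ f x)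
    (hloc : ∀ f : C(X, ℂ), ∃ (ψ : X ≃ₜ X) (τ : C(X, ℂ)),
      (∀ x, ‖τ x‖ = 1) ∧ Φ f = τ * f.comp (ψ : C(X, X)))
    {ε : X → X} (hε : ∀ x f, Φ f x = Φ 1 x * f (ε x)) : Continuous ε := by
  have hone := apply_one_apply_ne_zero hloc
  refine continuous_of_forall_continuous_comp hsep fun f => ?_
  have hfε : f ∘ ε = fun x => (Φ 1 x)⁻¹ * Φ f x := funext fun x => by simp [hε x f, hone x]
  rw [hfε]
  exact ((Φ 1).continuous.inv₀ hone).mul (Φ f).continuous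

end WeightedComposition

theorem stmt18 {X : Type*} [TopologicalSpace X] [CompactSpace X] [T2Space X]
    (hsep : ∀ x : X, ∃ f : C(X, ℂ), ∀ y : X, y ≠ x → f y ≠ f x)
    (Φ : C(X, ℂ) →ₗ[ℂ] C(X, ℂ))
    (hloc : ∀ f : C(X, ℂ), ∃ (ψ : X ≃ₜ X) (τ : C(X, ℂ)),
      (∀ x, ‖τ x‖ = 1) ∧ Φ f = τ * f.comp (ψ : C(X, X))) :
    ∃ (ψ : X ≃ₜ X) (τ : C(X, ℂ)), (∀ x, ‖τ x‖ = 1) ∧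
      ∀ f : C(X, ℂ), Φ f = τ * f.comp (ψ : C(X, X)) := by
  choose ε hε using exists_apply_eq_apply_one_mul hloc
  let e : X ≃ X := Equiv.ofBijective ε (bijective_of_forall_apply_eq_apply_one_mul hsep hloc hε)
  have he : Continuous e := continuous_of_forall_apply_eq_apply_one_mul hsep hloc hε
  exact ⟨he.homeoOfEquivCompactToT2, Φ 1, norm_apply_one_apply hloc,
    fun f => ContinuousMap.ext fun x => hε x f⟩
end
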